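/- arXiv:1708.02332 — 2 statements merged into one kernel-verified Lean document; each statement's English description precedes it below -/
import Mathlib

section
/- For pairwise distinct indices i, j, k ∈ {1,…,N}, the smallest Lie subalgebra of the N×N real matrices (under the commutator) containing A_{ij} and A_{jk} equals the linear span of the four matrices A_{ij}, A_{jk}, A_{ik}, and B_{ijk}. -/
/-- `A i j = E i j + E j i - E i i - E j j`. -/
noncomputable def Amat (N : ℕ) (i j : Fin N) : Matrix (Fin N) (Fin N) ℝ :=
  Matrix.single i j 1 + Matrix.single j i 1 -
    Matrix.single i i 1 - Matrix.single j j 1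

/-- `B i j k = (E i k - E k i) - (E i j - E j i) - (E j k - E k j)`. -/
noncomputable def Bmat (N : ℕ) (i j k : Fin N) : Matrix (Fin N) (Fin N) ℝ :=
  (Matrix.single i k 1 - Matrix.single k i 1) -
    (Matrix.single i j 1 - Matrix.single j i 1) -
    (Matrix.single j k 1 - Matrix.single k j 1)

attribute [local instance 100] LieRing.ofAssociativeRing

/-- The smallest Lie subalgebra (linear subspace closed under the commutator)
of the `N × N` real matrices containing a set `S`. -/
noncomputable def lieGen (N : ℕ) (S : Set (Matrix (Fin N) (Fin N) ℝ)) :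
    LieSubalgebra ℝ (Matrix (Fin N) (Fin N) ℝ) :=
  LieSubalgebra.lieSpan ℝ (Matrix (Fin N) (Fin N) ℝ) S

/-!
`B i j k = ⁅A i j, A j k⁆`, and `A i k = A i j + ½ ⁅A j k, B i j k⁆`, so the four matrices lie in
the Lie algebra generated by `A i j` and `A j k`. Conversely the brackets of the four matrices
with one another are combinations of them, so their linear span is already a Lie subalgebra.
-/

namespace LieSubalgebra

variable {R L : Type*} [CommRing R] [LieRing L] [LieAlgebra R L]

open Submodule in
theorem coe_lieSpan_eq_span_of_forall_lie_mem_span {s : Set L}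
    (hs : ∀ x ∈ s, ∀ y ∈ s, ⁅x, y⁆ ∈ span R s) :
    (lieSpan R L s : Submodule R L) = span R s := by
  suffices ∀ {x y}, x ∈ span R s → y ∈ span R s → ⁅x, y⁆ ∈ span R s by
    refine le_antisymm ?_ submodule_span_le_lieSpan
    change _ ≤ ({ span R s with lie_mem' := this } : LieSubalgebra R L)
    rw [lieSpan_le]
    exact subset_span
  intro x y hx hy
  induction hx, hy using span_induction₂ with
  | mem_mem x y hx hy => exact hs x hx y hy
  | zero_left y hy => simp
  | zero_right x hx => simp
  | add_left x y z _ _ _ hx hy => simpa using add_mem hx hy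
  | add_right x y z _ _ _ hx hy => simpa using add_mem hx hy
  | smul_left r x y _ _ h => simpa using smul_mem _ r h
  | smul_right r x y _ _ h => simpa using smul_mem _ r h

theorem lieSpan_eq_lieSpan_of_subset {s t : Set L} (hst : s ⊆ t) (hts : t ⊆ lieSpan R L s) :
    lieSpan R L s = lieSpan R L t :=
  le_antisymm (lieSpan_mono hst) (lieSpan_le.mpr hts)

end LieSubalgebra

section Brackets

open Matrix

variable {N : ℕ} {i j k : Fin N} (hij : i ≠ j) (hik : i ≠ k) (hjk : j ≠ k)
include hij hik hjk

theorem lie_Amat_Amat_chain : ⁅Amat N i j, Amat N j k⁆ = Bmat N i j k := by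
  simp only [Ring.lie_def, Amat, Bmat, sub_mul, add_mul, mul_sub, mul_add, single_mul_single_same,
    single_mul_single_of_ne, hij, hij.symm, hik, hik.symm, hjk, hjk.symm, mul_one, ne_eq,
    not_false_eq_true]
  abel

theorem lie_Amat_Amat_of_left_eq : ⁅Amat N i j, Amat N i k⁆ = -Bmat N i j k := by
  simp only [Ring.lie_def, Amat, Bmat, sub_mul, add_mul, mul_sub, mul_add, single_mul_single_same,
    single_mul_single_of_ne, hij, hij.symm, hik, hik.symm, hjk, hjk.symm, mul_one, ne_eq,
    not_false_eq_true]
  abel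

theorem lie_Amat_Amat_of_right_eq : ⁅Amat N j k, Amat N i k⁆ = Bmat N i j k := by
  simp only [Ring.lie_def, Amat, Bmat, sub_mul, add_mul, mul_sub, mul_add, single_mul_single_same,
    single_mul_single_of_ne, hij, hij.symm, hik, hik.symm, hjk, hjk.symm, mul_one, ne_eq,
    not_false_eq_true]
  abel

theorem lie_Amat_left_Bmat :
    ⁅Amat N i j, Bmat N i j k⁆ = (2 : ℝ) • Amat N j k - (2 : ℝ) • Amat N i k := by
  simp only [Ring.lie_def, Amat, Bmat, sub_mul, add_mul, mul_sub, mul_add, single_mul_single_same,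
    single_mul_single_of_ne, hij, hij.symm, hik, hik.symm, hjk, hjk.symm, mul_one, ne_eq,
    not_false_eq_true, smul_sub, two_smul]
  abel

theorem lie_Amat_right_Bmat :
    ⁅Amat N j k, Bmat N i j k⁆ = (2 : ℝ) • Amat N i k - (2 : ℝ) • Amat N i j := by
  simp only [Ring.lie_def, Amat, Bmat, sub_mul, add_mul, mul_sub, mul_add, single_mul_single_same,
    single_mul_single_of_ne, hij, hij.symm, hik, hik.symm, hjk, hjk.symm, mul_one, ne_eq,
    not_false_eq_true, smul_sub, two_smul]
  abel

theorem lie_Amat_outer_Bmat :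
    ⁅Amat N i k, Bmat N i j k⁆ = (2 : ℝ) • Amat N i j - (2 : ℝ) • Amat N j k := by
  simp only [Ring.lie_def, Amat, Bmat, sub_mul, add_mul, mul_sub, mul_add, single_mul_single_same,
    single_mul_single_of_ne, hij, hij.symm, hik, hik.symm, hjk, hjk.symm, mul_one, ne_eq,
    not_false_eq_true, smul_sub, two_smul]
  abel

theorem lie_mem_of_Amat_Bmat_mem {p : Submodule ℝ (Matrix (Fin N) (Fin N) ℝ)}
    (hA₁ : Amat N i j ∈ p) (hA₂ : Amat N j k ∈ p) (hA₃ : Amat N i k ∈ p) (hB : Bmat N i j k ∈ p) :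
    ∀ x ∈ ({Amat N i j, Amat N j k, Amat N i k, Bmat N i j k} : Set (Matrix (Fin N) (Fin N) ℝ)),
    ∀ y ∈ ({Amat N i j, Amat N j k, Amat N i k, Bmat N i j k} : Set (Matrix (Fin N) (Fin N) ℝ)),
    ⁅x, y⁆ ∈ p := by
  have brackets := And.intro (lie_Amat_Amat_chain hij hik hjk) <| And.intro
    (lie_Amat_Amat_of_left_eq hij hik hjk) <| And.intro (lie_Amat_Amat_of_right_eq hij hik hjk) <|
    And.intro (lie_Amat_left_Bmat hij hik hjk) <| And.intro (lie_Amat_right_Bmat hij hik hjk)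
    (lie_Amat_outer_Bmat hij hik hjk)
  rintro x (rfl | rfl | rfl | rfl) y (rfl | rfl | rfl | rfl) <;>
  first
  | rw [lie_self]; exact zero_mem _
  | simp only [brackets, neg_mem_iff]
  | rw [← lie_skew, neg_mem_iff]; simp only [brackets, neg_mem_iff]
  all_goals apply_rules [sub_mem, Submodule.smul_mem]

end Brackets

theorem lieGen_pair_eq_span (N : ℕ) (i j k : Fin N)
    (hij : i ≠ j) (hik : i ≠ k) (hjk : j ≠ k) :
    (lieGen N {Amat N i j, Amat N j k} : Set (Matrix (Fin N) (Fin N) ℝ)) =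
      (Submodule.span ℝ
        ({Amat N i j, Amat N j k, Amat N i k, Bmat N i j k} :
          Set (Matrix (Fin N) (Fin N) ℝ)) : Set (Matrix (Fin N) (Fin N) ℝ)) := by
  set K := lieGen N {Amat N i j, Amat N j k}
  have hA₁ : Amat N i j ∈ K := LieSubalgebra.subset_lieSpan (by simp)
  have hA₂ : Amat N j k ∈ K := LieSubalgebra.subset_lieSpan (by simp)
  have hB : Bmat N i j k ∈ K := lie_Amat_Amat_chain hij hik hjk ▸ K.lie_mem hA₁ hA₂
  have hA₃ : Amat N i k ∈ K := by
    have h : Amat N i k = Amat N i j + (1 / 2 : ℝ) • ⁅Amat N j k, Bmat N i j k⁆ := by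
      rw [lie_Amat_right_Bmat hij hik hjk, smul_sub, smul_smul, smul_smul]
      norm_num
    exact h ▸ K.add_mem hA₁ (K.smul_mem _ (K.lie_mem hA₂ hB))
  have hK : K = LieSubalgebra.lieSpan ℝ _
      {Amat N i j, Amat N j k, Amat N i k, Bmat N i j k} := by
    refine LieSubalgebra.lieSpan_eq_lieSpan_of_subset (by grind) ?_
    rintro x (rfl | rfl | rfl | rfl) <;> assumption
  rw [hK, ← LieSubalgebra.coe_toSubmodule,
    LieSubalgebra.coe_lieSpan_eq_span_of_forall_lie_mem_span]
  exact lie_mem_of_Amat_Bmat_mem hij hik hjk (p := Submodule.span ℝ _)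
    (Submodule.subset_span (by simp)) (Submodule.subset_span (by simp))
    (Submodule.subset_span (by simp)) (Submodule.subset_span (by simp))
end

section
/- Let N ≥ 2 and let E be a set of pairs (i,j) with 1 ≤ i < j ≤ N. Then the Lie subalgebra Lie({A_{ij} : (i,j) ∈ E}) equals the Lie algebra 𝔤 of all real N×N matrices whose row sums and column sums are all zero if and only if the simple graph Γ_E with vertex set {1,…,N} and edge set E is connected. -/
attribute [local instance 100] LieRing.ofAssociativeRing

/-- The set of real `N × N` matrices all of whose row sums and column sums are zero. -/
def gSet (N : ℕ) : Set (Matrix (Fin N) (Fin N) ℝ) :=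
  {M | (∀ i, ∑ j, M i j = 0) ∧ (∀ j, ∑ i, M i j = 0)}

/-- The simple graph on `{1,…,N}` whose edges are the pairs in `E`. -/
def graphOf (N : ℕ) (E : Set (Fin N × Fin N)) : SimpleGraph (Fin N) where
  Adj a b := a ≠ b ∧ ((a, b) ∈ E ∨ (b, a) ∈ E)
  symm := by
    refine ⟨?_⟩
    intro a b h
    exact ⟨h.1.symm, h.2.symm⟩
  loopless := by
    refine ⟨?_⟩
    intro a h
    exact h.1 rfl

/-!
Write `A_{ij} = -v vᵀ` with `v = e_i - e_j`. Rank-one matrices satisfy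
`⁅x yᵀ, u wᵀ⁆ = (y ⬝ u) x wᵀ - (w ⬝ x) u yᵀ`, so the generators of two edges sharing a vertex
produce `(e_a - e_b)(e_b - e_d)ᵀ`, and chaining along walks gives `(e_a - e_b)(e_c - e_d)ᵀ` for
any two edges of a connected graph, hence for any four vertices by telescoping. These span `𝔤`,
since `M = ∑ M_ab (e_a - e_r)(e_b - e_r)ᵀ` when all line sums of `M` vanish. Conversely, matrices
vanishing outside pairs of vertices in a common connected component form a Lie subalgebra
containing every generator, and `A_{ab}` does not lie in it when `a` and `b` are not connected.
-/

open Matrix SimpleGraph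

variable {n : Type*} [DecidableEq n] {R : Type*} [CommRing R]

def edgeVec (a b : n) : n → R := Pi.single a 1 - Pi.single b 1

lemma edgeVec_apply (a b c : n) :
    (edgeVec a b c : R) = (if c = a then 1 else 0) - (if c = b then 1 else 0) := by
  simp [edgeVec, Pi.single_apply]

lemma edgeVec_self (a : n) : (edgeVec a a : n → R) = 0 := sub_self _

lemma edgeVec_add_edgeVec (a b c : n) : (edgeVec a b + edgeVec b c : n → R) = edgeVec a c := by
  simp only [edgeVec]; abel

lemma edgeVec_swap (a b : n) : (edgeVec b a : n → R) = -edgeVec a b :=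
  (neg_sub _ _).symm

lemma eq_or_eq_of_edgeVec_apply_ne_zero {a b c : n} (h : (edgeVec a b c : R) ≠ 0) :
    c = a ∨ c = b := by
  by_contra! hc
  simp [edgeVec_apply, hc.1, hc.2] at h

lemma edgeVec_mem_of_reachable {G : SimpleGraph n} {p : Submodule R (n → R)}
    (hp : ∀ a b, G.Adj a b → edgeVec a b ∈ p) {a c : n} (h : G.Reachable a c) :
    edgeVec a c ∈ p := by
  obtain ⟨w⟩ := h
  induction w with
  | nil => rw [edgeVec_self]; exact zero_mem p
  | @cons a b c hab _ ih => rw [← edgeVec_add_edgeVec a b c]; exact add_mem (hp a b hab) ih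

variable [Fintype n]

lemma dotProduct_edgeVec (x : n → R) (a b : n) : x ⬝ᵥ edgeVec a b = x a - x b := by
  simp [edgeVec, dotProduct_sub]

lemma edgeVec_dotProduct_self {a b : n} (h : a ≠ b) : (edgeVec a b ⬝ᵥ edgeVec a b : R) = 2 := by
  rw [dotProduct_edgeVec]; simp [edgeVec_apply, h, h.symm]; norm_num

lemma edgeVec_dotProduct_edgeVec_of_ne {a b d : n} (hab : a ≠ b) (hbd : b ≠ d) (had : a ≠ d) :
    (edgeVec a b ⬝ᵥ edgeVec b d : R) = -1 := by
  rw [dotProduct_edgeVec]; simp [edgeVec_apply, hab.symm, hbd.symm, had.symm]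

lemma edgeVec_dotProduct_one (a b : n) : (edgeVec a b ⬝ᵥ 1 : R) = 0 := by
  simp [edgeVec, sub_dotProduct]

lemma one_dotProduct_edgeVec (a b : n) : (1 ⬝ᵥ edgeVec a b : R) = 0 := by
  rw [dotProduct_comm, edgeVec_dotProduct_one]

lemma lie_vecMulVec (x y u w : n → R) :
    ⁅vecMulVec x y, vecMulVec u w⁆ = (y ⬝ᵥ u) • vecMulVec x w - (w ⬝ᵥ x) • vecMulVec u y := by
  rw [Ring.lie_def, vecMulVec_mul_vecMulVec, vecMulVec_mul_vecMulVec, vecMulVec_smul,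
    vecMulVec_smul]

variable (n R) in
def zeroSumLie : LieSubalgebra R (Matrix n n R) where
  carrier := {M | M *ᵥ 1 = 0 ∧ 1 ᵥ* M = 0}
  add_mem' := by
    rintro A B ⟨hA, hA'⟩ ⟨hB, hB'⟩
    exact ⟨by rw [add_mulVec, hA, hB, add_zero], by rw [vecMul_add, hA', hB', add_zero]⟩
  zero_mem' := ⟨zero_mulVec _, vecMul_zero _⟩
  smul_mem' := by
    rintro c A ⟨hA, hA'⟩
    exact ⟨by rw [smul_mulVec, hA, smul_zero], by rw [vecMul_smul, hA', smul_zero]⟩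
  lie_mem' := by
    rintro A B ⟨hA, hA'⟩ ⟨hB, hB'⟩
    refine ⟨?_, ?_⟩
    · rw [Ring.lie_def, sub_mulVec, ← mulVec_mulVec, ← mulVec_mulVec, hA, hB, mulVec_zero,
        mulVec_zero, sub_zero]
    · rw [Ring.lie_def, vecMul_sub, ← vecMul_vecMul, ← vecMul_vecMul, hA', hB', zero_vecMul,
        zero_vecMul, sub_zero]

lemma vecMulVec_edgeVec_mem_zeroSumLie (a b c d : n) :
    vecMulVec (edgeVec a b) (edgeVec c d) ∈ zeroSumLie n R := by
  refine ⟨?_, ?_⟩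
  · rw [vecMulVec_mulVec, edgeVec_dotProduct_one, MulOpposite.op_zero, zero_smul]
  · rw [vecMul_vecMulVec, one_dotProduct_edgeVec, zero_smul]

lemma eq_sum_smul_vecMulVec_edgeVec {M : Matrix n n R} (hM : M ∈ zeroSumLie n R) (r : n) :
    M = ∑ a, ∑ b, M a b • vecMulVec (edgeVec a r) (edgeVec b r) := by
  have hrow : ∀ i, ∑ j, M i j = 0 := fun i => by simpa [mulVec, dotProduct] using congrFun hM.1 i
  have hcol : ∀ j, ∑ i, M i j = 0 := fun j => by simpa [vecMul, dotProduct] using congrFun hM.2 j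
  ext i j
  simp [Matrix.sum_apply, vecMulVec_apply, edgeVec_apply, mul_sub, Finset.sum_sub_distrib,
    mul_ite, hrow, hcol]

lemma coe_zeroSumLie (N : ℕ) :
    (zeroSumLie (Fin N) ℝ : Set (Matrix (Fin N) (Fin N) ℝ)) = gSet N := by
  ext M
  simp [zeroSumLie, gSet, mulVec, vecMul, dotProduct, funext_iff]

variable (R) in
def reachableSupported (G : SimpleGraph n) : LieSubalgebra R (Matrix n n R) where
  carrier := {M | ∀ a b, ¬G.Reachable a b → M a b = 0}
  add_mem' hA hB a b h := by simp [hA a b h, hB a b h]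
  zero_mem' _ _ _ := rfl
  smul_mem' c _ hA a b h := by simp [hA a b h]
  lie_mem' {A B} hA hB a b h := by
    have mul_apply_eq_zero : ∀ X Y : Matrix n n R, (∀ a b, ¬G.Reachable a b → X a b = 0) →
        (∀ a b, ¬G.Reachable a b → Y a b = 0) → (X * Y) a b = 0 := by
      intro X Y hX hY
      rw [mul_apply]
      refine Finset.sum_eq_zero fun c _ => ?_
      by_cases hac : G.Reachable a c
      · rw [hY c b fun hcb => h (hac.trans hcb), mul_zero]
      · rw [hX a c hac, zero_mul]
    simp [Ring.lie_def, mul_apply_eq_zero A B hA hB, mul_apply_eq_zero B A hB hA]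

lemma vecMulVec_edgeVec_mem_reachableSupported_iff [Nontrivial R] {G : SimpleGraph n} {a b : n} :
    vecMulVec (edgeVec a b) (edgeVec a b) ∈ reachableSupported R G ↔ G.Reachable a b := by
  constructor
  · intro hM
    by_contra hab
    have hne : a ≠ b := fun h => hab (h ▸ Reachable.refl a)
    have := hM a b hab
    simp [vecMulVec_apply, edgeVec_apply, hne, hne.symm] at this
  · intro hab c d hcd
    by_contra hne
    rw [vecMulVec_apply] at hne
    obtain hc | hc := eq_or_eq_of_edgeVec_apply_ne_zero (left_ne_zero_of_mul hne)
      <;> obtain hd | hd := eq_or_eq_of_edgeVec_apply_ne_zero (right_ne_zero_of_mul hne)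
      <;> subst hc hd
    exacts [hcd (Reachable.refl _), hcd hab, hcd hab.symm, hcd (Reachable.refl _)]

section Generation

variable {K : Type*} [Field K] {L : LieSubalgebra K (Matrix n n K)}

lemma vecMulVec_mem_of_chain {x y z : n → K} (hxy : vecMulVec x y ∈ L) (hyz : vecMulVec y z ∈ L)
    (hyy : vecMulVec y y ∈ L) (hy : y ⬝ᵥ y ≠ 0) : vecMulVec x z ∈ L := by
  have key : (y ⬝ᵥ y) • vecMulVec x z =
      ⁅vecMulVec x y, vecMulVec y z⁆ + (z ⬝ᵥ x) • vecMulVec y y := by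
    rw [lie_vecMulVec]; abel
  refine (L.toSubmodule.smul_mem_iff hy).mp ?_
  rw [LieSubalgebra.mem_toSubmodule, key]
  exact add_mem (L.lie_mem hxy hyz) (L.smul_mem _ hyy)

lemma vecMulVec_mem_of_dotProduct_ne_zero {x y : n → K} (hx : vecMulVec x x ∈ L)
    (hy : vecMulVec y y ∈ L) (hxy : x ⬝ᵥ y ≠ 0) (hyy : 2 * (y ⬝ᵥ y) ≠ 0) :
    vecMulVec x y ∈ L := by
  set D := vecMulVec x y - vecMulVec y x
  have hD : D ∈ L := by
    have key : (x ⬝ᵥ y) • D = ⁅vecMulVec x x, vecMulVec y y⁆ := by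
      rw [lie_vecMulVec, dotProduct_comm y x, smul_sub]
    refine (L.toSubmodule.smul_mem_iff hxy).mp ?_
    rw [LieSubalgebra.mem_toSubmodule, key]
    exact L.lie_mem hx hy
  have key : (2 * (y ⬝ᵥ y)) • vecMulVec x y =
      ⁅D, vecMulVec y y⁆ + (2 * (x ⬝ᵥ y)) • vecMulVec y y + (y ⬝ᵥ y) • D := by
    simp only [D, sub_lie, lie_vecMulVec, dotProduct_comm y x]
    module
  refine (L.toSubmodule.smul_mem_iff hyy).mp ?_
  rw [LieSubalgebra.mem_toSubmodule, key]
  exact add_mem (add_mem (L.lie_mem hD hy) (L.smul_mem _ hy)) (L.smul_mem _ hD)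

variable [NeZero (2 : K)] {G : SimpleGraph n}

lemma vecMulVec_edgeVec_mem_of_adj_of_adj
    (hL : ∀ a b, G.Adj a b → vecMulVec (edgeVec a b) (edgeVec a b) ∈ L) {a b d : n}
    (hab : G.Adj a b) (hbd : G.Adj b d) : vecMulVec (edgeVec a b) (edgeVec b d) ∈ L := by
  obtain rfl | had := eq_or_ne a d
  · rw [edgeVec_swap a b, vecMulVec_neg]
    exact neg_mem (hL a b hab)
  · refine vecMulVec_mem_of_dotProduct_ne_zero (hL a b hab) (hL b d hbd) ?_ ?_
    · rw [edgeVec_dotProduct_edgeVec_of_ne hab.ne hbd.ne had]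
      exact neg_ne_zero.mpr one_ne_zero
    · rw [edgeVec_dotProduct_self hbd.ne]
      exact mul_ne_zero two_ne_zero two_ne_zero

lemma vecMulVec_edgeVec_mem_of_walk
    (hL : ∀ a b, G.Adj a b → vecMulVec (edgeVec a b) (edgeVec a b) ∈ L) {b c : n}
    (w : G.Walk b c) {a d : n} (hab : G.Adj a b) (hcd : G.Adj c d) :
    vecMulVec (edgeVec a b) (edgeVec c d) ∈ L := by
  induction w generalizing a with
  | nil => exact vecMulVec_edgeVec_mem_of_adj_of_adj hL hab hcd
  | cons hbb' _ ih =>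
    refine vecMulVec_mem_of_chain (vecMulVec_edgeVec_mem_of_adj_of_adj hL hab hbb') (ih hbb' hcd)
      (hL _ _ hbb') ?_
    rw [edgeVec_dotProduct_self hbb'.ne]
    exact two_ne_zero

lemma vecMulVec_edgeVec_mem_of_connected
    (hL : ∀ a b, G.Adj a b → vecMulVec (edgeVec a b) (edgeVec a b) ∈ L) (hG : G.Connected)
    (a b c d : n) : vecMulVec (edgeVec a b) (edgeVec c d) ∈ L := by
  have of_adj : ∀ a b, G.Adj a b → ∀ c d, vecMulVec (edgeVec a b) (edgeVec c d) ∈ L :=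
    fun a b hab c d => edgeVec_mem_of_reachable
      (p := L.toSubmodule.comap (vecMulVecBilin K K (edgeVec a b)))
      (fun c d hcd => vecMulVec_edgeVec_mem_of_walk hL (hG b c).some hab hcd) (hG c d)
  exact edgeVec_mem_of_reachable
    (p := L.toSubmodule.comap ((vecMulVecBilin K K).flip (edgeVec c d)))
    (fun a b hab => of_adj a b hab c d) (hG a b)

lemma zeroSumLie_le_of_connected
    (hL : ∀ a b, G.Adj a b → vecMulVec (edgeVec a b) (edgeVec a b) ∈ L) (hG : G.Connected) :
    zeroSumLie n K ≤ L := by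
  intro M hM
  obtain ⟨r⟩ := hG.nonempty
  rw [eq_sum_smul_vecMulVec_edgeVec hM r]
  exact sum_mem fun a _ => sum_mem fun b _ =>
    L.smul_mem _ (vecMulVec_edgeVec_mem_of_connected hL hG a r b r)

end Generation

lemma Amat_eq_neg_vecMulVec_edgeVec {N : ℕ} (i j : Fin N) :
    Amat N i j = -vecMulVec (edgeVec i j) (edgeVec i j) := by
  simp only [Amat, edgeVec, single_eq_single_vecMulVec_single, sub_vecMulVec, vecMulVec_sub]
  abel

section Graph

variable {N : ℕ} (E : Set (Fin N × Fin N))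

lemma graphOf_reachable_of_mem {p : Fin N × Fin N} (hp : p ∈ E) :
    (graphOf N E).Reachable p.1 p.2 := by
  by_cases h : p.1 = p.2
  · exact h ▸ Reachable.refl _
  · exact Adj.reachable ⟨h, Or.inl hp⟩

lemma lieGen_le_reachableSupported :
    lieGen N {M | ∃ p ∈ E, M = Amat N p.1 p.2} ≤ reachableSupported ℝ (graphOf N E) := by
  refine LieSubalgebra.lieSpan_le.mpr ?_
  rintro _ ⟨p, hp, rfl⟩
  rw [Amat_eq_neg_vecMulVec_edgeVec]
  exact neg_mem (vecMulVec_edgeVec_mem_reachableSupported_iff.mpr (graphOf_reachable_of_mem E hp))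

lemma lieGen_le_zeroSumLie :
    lieGen N {M | ∃ p ∈ E, M = Amat N p.1 p.2} ≤ zeroSumLie (Fin N) ℝ := by
  refine LieSubalgebra.lieSpan_le.mpr ?_
  rintro _ ⟨p, -, rfl⟩
  rw [Amat_eq_neg_vecMulVec_edgeVec]
  exact neg_mem (vecMulVec_edgeVec_mem_zeroSumLie _ _ _ _)

lemma vecMulVec_edgeVec_mem_lieGen_of_adj {a b : Fin N} (h : (graphOf N E).Adj a b) :
    vecMulVec (edgeVec a b) (edgeVec a b) ∈ lieGen N {M | ∃ p ∈ E, M = Amat N p.1 p.2} := by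
  wlog hab : (a, b) ∈ E generalizing a b
  · simpa [edgeVec_swap b a] using this h.symm (h.2.resolve_left hab)
  rw [← neg_neg (vecMulVec _ _), ← Amat_eq_neg_vecMulVec_edgeVec]
  exact neg_mem (LieSubalgebra.subset_lieSpan ⟨(a, b), hab, rfl⟩)

end Graph

theorem lieGen_eq_g_iff_connected_general (N : ℕ) (hN : 2 ≤ N) (E : Set (Fin N × Fin N)) :
    (lieGen N {M | ∃ p ∈ E, M = Amat N p.1 p.2} : Set (Matrix (Fin N) (Fin N) ℝ))
      = gSet N ↔ (graphOf N E).Connected := by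
  rw [← coe_zeroSumLie, SetLike.coe_set_eq]
  constructor
  · intro h
    have : Nonempty (Fin N) := ⟨⟨0, by omega⟩⟩
    refine ⟨fun a b => ?_⟩
    rw [← vecMulVec_edgeVec_mem_reachableSupported_iff (R := ℝ)]
    exact lieGen_le_reachableSupported E (h ▸ vecMulVec_edgeVec_mem_zeroSumLie a b a b)
  · intro hG
    exact le_antisymm (lieGen_le_zeroSumLie E)
      (zeroSumLie_le_of_connected (fun _ _ => vecMulVec_edgeVec_mem_lieGen_of_adj E) hG)

theorem lieGen_eq_g_iff_connected (N : ℕ) (hN : 2 ≤ N) (E : Set (Fin N × Fin N))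
    (hE : ∀ p ∈ E, p.1 < p.2) :
    (lieGen N {M | ∃ p ∈ E, M = Amat N p.1 p.2} : Set (Matrix (Fin N) (Fin N) ℝ))
      = gSet N ↔ (graphOf N E).Connected :=
  lieGen_eq_g_iff_connected_general N hN E
end
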